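/- Qvol is additive under almost disjoint union: if X ∈ Z_n(A), Y ∈ Z_n(B) are rational n-cycles with |A ∩ B| ≤ n + 1, then Qvol(X + Y) = Qvol(X) + Qvol(Y). Moreover, for n ≥ 2 every taut rational filling of X + Y splits as a sum of taut rational fillings of X and of Y. -/

import Mathlib

/-- Oriented `n`-simplices on vertex set `ℕ`, represented by their vertex sets
(of size `n+1`), with the orientation given by increasing order. -/
abbrev Simp (n : ℕ) : Type := {s : Finset ℕ // s.card = n + 1}

/-- Simplicial `n`-chains with coefficients in `R`. -/
abbrev GChain (R : Type) [CommRing R] (n : ℕ) : Type := Simp n →₀ R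

/-- Integral simplicial `n`-chains. -/
abbrev ZChain (n : ℕ) : Type := GChain ℤ n

/-- Boundary of a single oriented `(n+1)`-simplex. -/
noncomputable def simpBdry (R : Type) [CommRing R] {n : ℕ} (s : Simp (n + 1)) :
    GChain R n :=
  ∑ v ∈ (s : Finset ℕ).attach,
    ((-1 : R) ^ (((s : Finset ℕ).filter (· < (v : ℕ))).card)) •
      Finsupp.single
        ⟨(s : Finset ℕ).erase (v : ℕ), by
          have hv := v.2
          simp [Finset.card_erase_of_mem hv, s.2]⟩ 1

/-- The simplicial boundary operator. -/
noncomputable def bdry {R : Type} [CommRing R] {n : ℕ} (M : GChain R (n + 1)) :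
    GChain R n :=
  M.sum fun s c => c • simpBdry R s

/-- The `L¹`-norm of an integral chain. -/
noncomputable def znorm {n : ℕ} (M : ZChain n) : ℕ :=
  M.sum fun _ c => c.natAbs

/-- The set of vertices of simplices with nonzero coefficient. -/
noncomputable def vert {R : Type} [CommRing R] {n : ℕ} (M : GChain R n) : Finset ℕ :=
  M.support.sup fun s => (s : Finset ℕ)

/-- The chain is supported on simplices with vertices in `A`. -/
def suppOn {R : Type} [CommRing R] {n : ℕ} (A : Finset ℕ) (M : GChain R n) : Prop :=
  ∀ s ∈ M.support, (s : Finset ℕ) ⊆ A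

/-- Total multiplicity in `M` of simplices containing the vertex `x`. -/
noncomputable def zdeg {n : ℕ} (x : ℕ) (M : ZChain n) : ℕ :=
  M.sum fun s c => if x ∈ (s : Finset ℕ) then c.natAbs else 0

/-- Maximum vertex degree of an integral chain. -/
noncomputable def zmaxdeg {n : ℕ} (M : ZChain n) : ℕ :=
  (vert M).sup fun x => zdeg x M

/-- The cone from the vertex `x` over the chain `U`: each oriented simplex of `U`
gets `x` adjoined as a new first vertex; simplices already containing `x`
contribute `0`. -/
noncomputable def cone {n : ℕ} (x : ℕ) (U : ZChain n) : ZChain (n + 1) :=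
  U.sum fun s c =>
    if h : x ∈ (s : Finset ℕ) then 0
    else
      (((-1 : ℤ) ^ (((s : Finset ℕ).filter (· < x)).card)) * c) •
        Finsupp.single ⟨insert x (s : Finset ℕ), by
          simp [Finset.card_insert_of_notMem h, s.2]⟩ 1

/-- `Zvol X`: the minimal `L¹`-norm of an integral filling of `X`. -/
noncomputable def zvol {n : ℕ} (X : ZChain n) : ℕ :=
  sInf {m : ℕ | ∃ M : ZChain (n + 1), bdry M = X ∧ znorm M = m}

/-- A chain is taut if it is an optimal filling of its boundary. -/
def Taut {n : ℕ} (M : ZChain (n + 1)) : Prop :=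
  znorm M = zvol (bdry M)

/-- The `L¹`-norm of a chain with coefficients in a linear ordered field. -/
noncomputable def fnorm {K : Type} [Field K] [LinearOrder K] [IsStrictOrderedRing K] {n : ℕ} (M : GChain K n) : K :=
  M.sum fun _ c => |c|

/-- The minimal `L¹`-norm of a rational filling. -/
noncomputable def qvol {n : ℕ} (X : GChain ℚ n) : ℝ :=
  sInf {r : ℝ | ∃ M : GChain ℚ (n + 1), bdry M = X ∧ ((fnorm M : ℚ) : ℝ) = r}

/-- The minimal `L¹`-norm of a real filling. -/
noncomputable def rvol {n : ℕ} (X : GChain ℝ n) : ℝ :=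
  sInf {r : ℝ | ∃ M : GChain ℝ (n + 1), bdry M = X ∧ fnorm M = r}

/-- View an integral chain as a rational chain. -/
noncomputable def toQ {n : ℕ} (X : ZChain n) : GChain ℚ n :=
  X.mapRange Int.cast (by simp)

/-- View an integral chain as a real chain. -/
noncomputable def toR {n : ℕ} (X : ZChain n) : GChain ℝ n :=
  X.mapRange Int.cast (by simp)

/-- A rational chain is taut if it is an optimal rational filling of its
boundary. -/
def TautQ {n : ℕ} (M : GChain ℚ (n + 1)) : Prop :=
  ((fnorm M : ℚ) : ℝ) = qvol (bdry M)

/-!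
For `c ∈ A ∩ B`, the vertex map that fixes `A` and sends every other vertex to `c` induces a chain
map `collapse A c`. It fixes chains on `A` and kills cycles on `B`: their image lives on `A ∩ B`,
which spans at most one `(n+1)`-simplex, and that simplex contains `c`. So `collapse A c` turns a
filling `M` of `X + Y` into a filling of `X`, and `collapse B c'` turns it into a filling of `Y`.
Choosing `c ≠ c'` when `A ∩ B` spans an `(n+1)`-simplex, no simplex of `M` survives both
collapses, whence `|M| ≥ Qvol X + Qvol Y`; adding fillings gives the reverse inequality.

If `M` is taut, equality forces every simplex of `M` to survive one of the two collapses, for every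
admissible choice of apexes. For `n ≥ 1` this sorts the simplices of `M` into an `A` side and a
`B` side, and the part of `M` on the `A` side fills `X`.
-/

open Finset

namespace SimplicialChain

section Complex

variable {R : Type} [CommRing R] {m : ℕ} {s A : Finset ℕ} {c v y : ℕ}

/-- For `x ∈ s`, `(-1) ^ pos s x` is the sign of the face of `s` opposite `x`. -/
def pos (s : Finset ℕ) (x : ℕ) : ℕ := #{y ∈ s | y < x}

lemma pos_erase (hy : y ∈ s) (x : ℕ) :
    pos (s.erase y) x + (if y < x then 1 else 0) = pos s x := by
  unfold pos
  rw [filter_erase]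
  split_ifs with h
  · rw [card_erase_of_mem (by simp [hy, h])]
    have : 0 < #{z ∈ s | z < x} := card_pos.2 ⟨y, by simp [hy, h]⟩
    omega
  · rw [erase_eq_of_notMem (by simp [h]), add_zero]

lemma pos_insert (hy : y ∉ s) (x : ℕ) :
    pos (insert y s) x = pos s x + if y < x then 1 else 0 := by
  unfold pos
  rw [filter_insert]
  split_ifs with h
  · rw [card_insert_of_notMem (by simp [hy])]
  · rw [add_zero]

lemma pos_erase_self (s : Finset ℕ) (x : ℕ) : pos (s.erase x) x = pos s x := by
  by_cases hx : x ∈ s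
  · simpa using pos_erase hx x
  · rw [erase_eq_of_notMem hx]

lemma neg_one_pow_eq_neg_of_odd {a b : ℕ} (h : (a + b) % 2 = 1) :
    (-1 : R) ^ a = -(-1) ^ b := by
  obtain ⟨k, hk⟩ : ∃ k, a = b + 2 * k + 1 ∨ b = a + 2 * k + 1 := by
    rcases le_total a b with hab | hab
    · exact ⟨(b - a) / 2, Or.inr (by omega)⟩
    · exact ⟨(a - b) / 2, Or.inl (by omega)⟩
  rcases hk with rfl | rfl <;> simp [pow_add, pow_mul]

lemma neg_one_pow_add_self (a : ℕ) : (-1 : R) ^ (a + a) = 1 := by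
  rw [← two_mul, pow_mul]; simp

variable (R m) in
/-- The junk value `0` when `s` does not have `m + 1` vertices is what makes degenerate simplices
vanish. -/
noncomputable def ofFinset (s : Finset ℕ) : GChain R m :=
  if h : #s = m + 1 then Finsupp.single ⟨s, h⟩ 1 else 0

lemma ofFinset_val (σ : Simp m) : ofFinset R m σ.1 = Finsupp.single σ 1 := dif_pos σ.2

lemma ofFinset_of_card_ne (h : #s ≠ m + 1) : ofFinset R m s = 0 := dif_neg h

lemma card_face (σ : Simp (m + 1)) (hv : v ∈ σ.1) : #(σ.1.erase v) = m + 1 := by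
  rw [card_erase_of_mem hv, σ.2]; rfl

lemma ofFinset_face (σ : Simp (m + 1)) (hv : v ∈ σ.1) :
    ofFinset R m (σ.1.erase v) = Finsupp.single ⟨σ.1.erase v, card_face σ hv⟩ 1 :=
  dif_pos (card_face σ hv)

lemma simpBdry_eq_sum (σ : Simp (m + 1)) :
    simpBdry R σ = ∑ v ∈ σ.1, (-1 : R) ^ pos σ.1 v • ofFinset R m (σ.1.erase v) := by
  rw [simpBdry, ← sum_attach σ.1]
  exact sum_congr rfl fun v _ => by rw [ofFinset_face σ v.2]; rfl

variable (R m) in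
noncomputable def bdryₗ : GChain R (m + 1) →ₗ[R] GChain R m :=
  Finsupp.linearCombination R (simpBdry R)

@[simp] lemma bdryₗ_apply (M : GChain R (m + 1)) : bdryₗ R m M = bdry M := rfl

lemma bdry_zero : bdry (0 : GChain R (m + 1)) = 0 := map_zero (bdryₗ R m)

lemma bdry_add (M N : GChain R (m + 1)) : bdry (M + N) = bdry M + bdry N :=
  map_add (bdryₗ R m) M N

lemma bdry_sub (M N : GChain R (m + 1)) : bdry (M - N) = bdry M - bdry N :=
  map_sub (bdryₗ R m) M N

lemma bdry_smul (k : R) (M : GChain R (m + 1)) : bdry (k • M) = k • bdry M :=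
  map_smul (bdryₗ R m) k M

lemma bdry_single (σ : Simp (m + 1)) (k : R) :
    bdry (Finsupp.single σ k) = k • simpBdry R σ :=
  Finsupp.linearCombination_single R k σ

lemma bdry_ofFinset (hs : #s = m + 2) :
    bdry (ofFinset R (m + 1) s) = ∑ v ∈ s, (-1 : R) ^ pos s v • ofFinset R m (s.erase v) := by
  rw [ofFinset, dif_pos hs, bdry_single, one_smul, simpBdry_eq_sum]

lemma exists_subset_of_mem_support_bdry {N : GChain R (m + 1)} {δ : Simp m}
    (hδ : δ ∈ (bdry N).support) : ∃ σ ∈ N.support, δ.1 ⊆ σ.1 := by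
  classical
  obtain ⟨σ, hσ, hδσ⟩ := mem_biUnion.1 (Finsupp.support_sum hδ)
  refine ⟨σ, hσ, ?_⟩
  have hδσ' := Finsupp.support_smul hδσ
  rw [simpBdry_eq_sum] at hδσ'
  obtain ⟨v, hv, hδv⟩ := mem_biUnion.1 (Finsupp.support_finsetSum hδσ')
  have hδv' := Finsupp.support_smul hδv
  rw [ofFinset_face σ hv] at hδv'
  rw [mem_singleton.1 (Finsupp.support_single_subset hδv')]
  exact erase_subset v σ.1

lemma pos_add_pos_erase_swap_odd {v w : ℕ} (hv : v ∈ s) (hw : w ∈ s) (hvw : v ≠ w) :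
    (pos s v + pos (s.erase v) w + (pos s w + pos (s.erase w) v)) % 2 = 1 := by
  have h₁ := pos_erase hv w
  have h₂ := pos_erase hw v
  split_ifs at h₁ h₂ <;> omega

/-- The two ways of removing `v` and `w` from `s` carry opposite signs. -/
lemma sum_sum_erase_erase_eq_zero (s : Finset ℕ) :
    ∑ v ∈ s, ∑ w ∈ s.erase v,
      (-1 : R) ^ (pos s v + pos (s.erase v) w) • ofFinset R m ((s.erase v).erase w) = 0 := by
  rw [← sum_finset_product' s.offDiag s (fun v => s.erase v) (by simp [and_comm, eq_comm])]
  refine sum_involution (fun p _ => p.swap) (fun p hp => ?_) (fun p hp _ => ?_)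
    (fun p hp => by simp only [mem_offDiag] at hp ⊢; tauto) (fun p _ => rfl)
  · obtain ⟨hv, hw, hvw⟩ := mem_offDiag.1 hp
    rw [Prod.fst_swap, Prod.snd_swap, erase_right_comm,
      neg_one_pow_eq_neg_of_odd (pos_add_pos_erase_swap_odd hv hw hvw), neg_smul, neg_add_cancel]
  · exact fun h => (mem_offDiag.1 hp).2.2 (Prod.ext_iff.1 h).2

theorem bdry_bdry (M : GChain R (m + 2)) : bdry (bdry M) = 0 := by
  induction M using Finsupp.induction_linear with
  | zero => rw [bdry_zero, bdry_zero]
  | add M N hM hN => rw [bdry_add, bdry_add, hM, hN, add_zero]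
  | single σ k =>
    rw [bdry_single, simpBdry_eq_sum, ← bdryₗ_apply, map_smul, map_sum]
    rw [sum_congr rfl fun v hv => by
      rw [map_smul, bdryₗ_apply, bdry_ofFinset (card_face σ hv), smul_sum]]
    simp_rw [smul_smul, ← pow_add]
    rw [sum_sum_erase_erase_eq_zero, smul_zero]

lemma ofFinset_insert_of_mem (σ : Simp m) (hc : c ∈ σ.1) :
    ofFinset R (m + 1) (insert c σ.1) = 0 :=
  ofFinset_of_card_ne (by rw [insert_eq_of_mem hc, σ.2]; omega)

/-- The cone from the vertex `c`, signed so that `c` takes its place in the increasing order;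
simplices containing `c` are sent to `0`. -/
noncomputable def coneMap (c : ℕ) : GChain R m →ₗ[R] GChain R (m + 1) :=
  Finsupp.linearCombination R fun σ => (-1 : R) ^ pos σ.1 c • ofFinset R (m + 1) (insert c σ.1)

lemma coneMap_ofFinset (hs : #s = m + 1) :
    coneMap c (ofFinset R m s) = (-1 : R) ^ pos s c • ofFinset R (m + 1) (insert c s) := by
  rw [ofFinset, dif_pos hs, coneMap, Finsupp.linearCombination_single, one_smul]

lemma coneMap_ofFinset_of_mem (hc : c ∈ s) : coneMap c (ofFinset R m s) = 0 := by
  by_cases hs : #s = m + 1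
  · rw [coneMap_ofFinset hs, ofFinset_insert_of_mem ⟨s, hs⟩ hc, smul_zero]
  · rw [ofFinset_of_card_ne hs, map_zero]

lemma coneMap_eq_zero {U : GChain R m} (h : ∀ σ ∈ U.support, c ∈ σ.1) : coneMap c U = 0 := by
  rw [coneMap, Finsupp.linearCombination_apply]
  exact sum_eq_zero fun σ hσ => by
    dsimp only; rw [ofFinset_insert_of_mem σ (h σ hσ), smul_zero, smul_zero]

lemma bdry_coneMap_add_coneMap_simpBdry (σ : Simp (m + 1)) :
    bdry (coneMap c (Finsupp.single σ 1)) + coneMap c (simpBdry R σ) = Finsupp.single σ 1 := by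
  rw [← ofFinset_val, simpBdry_eq_sum, map_sum]
  by_cases hc : c ∈ σ.1
  · rw [coneMap_ofFinset_of_mem hc, bdry_zero, zero_add, sum_eq_single_of_mem c hc
      fun y hy hyc => by rw [map_smul, coneMap_ofFinset_of_mem (mem_erase.2 ⟨Ne.symm hyc, hc⟩),
        smul_zero]]
    rw [map_smul, coneMap_ofFinset (card_face σ hc), insert_erase hc, smul_smul, ← pow_add,
      pos_erase_self, neg_one_pow_add_self, one_smul]
  · have hins : #(insert c σ.1) = m + 3 := by rw [card_insert_of_notMem hc, σ.2]
    rw [coneMap_ofFinset σ.2, bdry_smul, bdry_ofFinset hins, sum_insert hc, erase_insert hc,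
      pos_insert hc, if_neg (lt_irrefl c), add_zero, smul_add, smul_smul, ← pow_add,
      neg_one_pow_add_self, one_smul, add_assoc, smul_sum, ← sum_add_distrib, add_eq_left]
    refine sum_eq_zero fun y hy => ?_
    have hyc : c ≠ y := fun h => hc (h ▸ hy)
    rw [map_smul, coneMap_ofFinset (card_face σ hy), erase_insert_of_ne hyc, smul_smul, smul_smul,
      ← pow_add, ← pow_add, neg_one_pow_eq_neg_of_odd (b := pos σ.1 y + pos (σ.1.erase y) c),
      neg_smul, neg_add_cancel]
    have h₁ := pos_insert hc y
    have h₂ := pos_erase hy c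
    split_ifs at h₁ h₂ <;> omega

/-- On a simplex containing `c` both cones vanish except the cone over its face opposite `c`,
which gives the simplex back. -/
theorem bdry_coneMap_add_coneMap_bdry (c : ℕ) (U : GChain R (m + 1)) :
    bdry (coneMap c U) + coneMap c (bdry U) = U := by
  induction U using Finsupp.induction_linear with
  | zero => rw [map_zero, bdry_zero, bdry_zero, map_zero, add_zero]
  | add U V hU hV =>
    rw [map_add, bdry_add, bdry_add, map_add, add_add_add_comm, hU, hV]
  | single σ k =>
    rw [← Finsupp.smul_single_one, map_smul, bdry_smul, bdry_smul, bdry_single, one_smul,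
      map_smul, ← smul_add, bdry_coneMap_add_coneMap_simpBdry]

lemma suppOn_bdry {N : GChain R (m + 1)} (h : suppOn A N) : suppOn A (bdry N) := fun _ hδ =>
  let ⟨σ, hσ, hδσ⟩ := exists_subset_of_mem_support_bdry hδ
  hδσ.trans (h σ hσ)

noncomputable def restrict (A : Finset ℕ) : GChain R m →ₗ[R] GChain R m where
  toFun M := M.filter fun σ => σ.1 ⊆ A
  map_add' _ _ := Finsupp.filter_add
  map_smul' _ _ := Finsupp.filter_smul

lemma restrict_apply (M : GChain R m) : restrict A M = M.filter fun σ => σ.1 ⊆ A := rfl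

lemma restrict_of_suppOn {M : GChain R m} (h : suppOn A M) : restrict A M = M :=
  (Finsupp.filter_eq_self_iff _ _).2 fun σ hσ => h σ (Finsupp.mem_support_iff.2 hσ)

lemma suppOn_restrict (M : GChain R m) : suppOn A (restrict A M) := fun σ hσ => by
  rw [restrict_apply, Finsupp.support_filter] at hσ
  exact (mem_filter.1 hσ).2

lemma restrict_bdry_restrict (N : GChain R (m + 1)) :
    restrict A (bdry (restrict A N)) = bdry (restrict A N) :=
  restrict_of_suppOn (suppOn_bdry (suppOn_restrict N))

lemma restrict_ofFinset_face (σ : Simp (m + 1)) (hy : y ∈ σ.1) :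
    restrict A (ofFinset R m (σ.1.erase y)) =
      if σ.1.erase y ⊆ A then ofFinset R m (σ.1.erase y) else 0 := by
  rw [ofFinset_face σ hy, restrict_apply]
  split_ifs with h
  · exact Finsupp.filter_single_of_pos (p := fun σ : Simp m => σ.1 ⊆ A) h
  · exact Finsupp.filter_single_of_neg (p := fun σ : Simp m => σ.1 ⊆ A) h

lemma restrict_simpBdry_of_sdiff_eq_singleton {σ : Simp (m + 1)} (hv : σ.1 \ A = {v}) :
    restrict A (simpBdry R σ) = (-1 : R) ^ pos σ.1 v • ofFinset R m (σ.1.erase v) := by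
  have hsdiff : ∀ {x}, x ∈ σ.1 → x ∉ A → x = v := fun hx hxA =>
    mem_singleton.1 (hv ▸ mem_sdiff.2 ⟨hx, hxA⟩)
  obtain ⟨hvσ, hvA⟩ := mem_sdiff.1 (hv ▸ mem_singleton_self v)
  rw [simpBdry_eq_sum, map_sum, sum_eq_single_of_mem v hvσ fun y hy hyv => ?_]
  · rw [map_smul, restrict_ofFinset_face σ hvσ, if_pos (show σ.1.erase v ⊆ A from fun x hx => by
      by_contra hxA; exact (mem_erase.1 hx).1 (hsdiff (mem_erase.1 hx).2 hxA))]
  · rw [map_smul, restrict_ofFinset_face σ hy,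
      if_neg fun hsub => hvA (hsub (mem_erase.2 ⟨Ne.symm hyv, hvσ⟩)), smul_zero]

lemma restrict_simpBdry_of_two_le {σ : Simp (m + 1)} (h : 2 ≤ #(σ.1 \ A)) :
    restrict A (simpBdry R σ) = 0 := by
  rw [simpBdry_eq_sum, map_sum]
  refine sum_eq_zero fun y hy => ?_
  obtain ⟨w, hw, hwy⟩ := exists_mem_ne h y
  rw [map_smul, restrict_ofFinset_face σ hy, if_neg fun hsub =>
    (mem_sdiff.1 hw).2 (hsub (mem_erase.2 ⟨hwy, (mem_sdiff.1 hw).1⟩)), smul_zero]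

/-- The chain map induced by the vertex map that fixes `A` and sends every other vertex to `c`.
It is written as `R + c * R ∂ (1 - R)`, `R` the restriction to `A`: a simplex with a single vertex
`v` outside `A` goes to the cone from `c` over its face opposite `v`, and a simplex with two or
more vertices outside `A` degenerates. -/
noncomputable def collapse (A : Finset ℕ) (c : ℕ) : GChain R (m + 1) →ₗ[R] GChain R (m + 1) :=
  restrict A + coneMap c ∘ₗ restrict A ∘ₗ bdryₗ R m ∘ₗ (LinearMap.id - restrict A)

lemma collapse_apply (M : GChain R (m + 1)) :
    collapse A c M = restrict A M + coneMap c (restrict A (bdry (M - restrict A M))) := rfl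

lemma collapse_of_suppOn {M : GChain R (m + 1)} (h : suppOn A M) : collapse A c M = M := by
  rw [collapse_apply, restrict_of_suppOn h, sub_self, bdry_zero, map_zero, map_zero, add_zero]

theorem bdry_collapse (M : GChain R (m + 2)) : bdry (collapse A c M) = collapse A c (bdry M) := by
  have hcone := eq_sub_of_add_eq (bdry_coneMap_add_coneMap_bdry c
    (restrict A (bdry (M - restrict A M))))
  rw [collapse_apply, collapse_apply, bdry_add, hcone, bdry_sub, map_sub, restrict_bdry_restrict,
    bdry_sub, bdry_bdry, bdry_sub, bdry_bdry, zero_sub, map_neg, restrict_bdry_restrict, map_neg,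
    sub_zero]
  abel

lemma collapse_of_bdry_eq_zero {Z : GChain R (m + 1)} (hZ : bdry Z = 0) :
    collapse A c Z = bdry (coneMap c (restrict A Z)) := by
  rw [collapse_apply, bdry_sub, hZ, zero_sub, map_neg, restrict_bdry_restrict, map_neg,
    ← sub_eq_add_neg]
  exact (eq_sub_of_add_eq (bdry_coneMap_add_coneMap_bdry c (restrict A Z))).symm

lemma collapse_single_of_not_subset {σ : Simp (m + 1)} (h : ¬ σ.1 ⊆ A) :
    collapse A c (Finsupp.single σ (1 : R)) = coneMap c (restrict A (simpBdry R σ)) := by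
  rw [collapse_apply, restrict_apply,
    Finsupp.filter_single_of_neg (p := fun σ : Simp (m + 1) => σ.1 ⊆ A) h, sub_zero, zero_add,
    bdry_single, one_smul]

def SurvivesCollapse (A : Finset ℕ) (c : ℕ) (s : Finset ℕ) : Prop :=
  s ⊆ A ∨ (#(s \ A) = 1 ∧ c ∉ s ∩ A)

instance (A : Finset ℕ) (c : ℕ) : DecidablePred (SurvivesCollapse A c) :=
  fun s => inferInstanceAs (Decidable (s ⊆ A ∨ (#(s \ A) = 1 ∧ c ∉ s ∩ A)))

lemma survivesCollapse_of_collapse_ne_zero {σ : Simp (m + 1)}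
    (h : collapse A c (Finsupp.single σ (1 : R)) ≠ 0) : SurvivesCollapse A c σ.1 := by
  by_cases hA : σ.1 ⊆ A
  · exact Or.inl hA
  rw [collapse_single_of_not_subset hA] at h
  obtain h₀ | h₁ | h₂ : #(σ.1 \ A) = 0 ∨ #(σ.1 \ A) = 1 ∨ 2 ≤ #(σ.1 \ A) := by omega
  · exact absurd (sdiff_eq_empty_iff_subset.1 (card_eq_zero.1 h₀)) hA
  · refine Or.inr ⟨h₁, fun hc => h ?_⟩
    obtain ⟨v, hv⟩ := card_eq_one.1 h₁
    obtain ⟨hcσ, hcA⟩ := mem_inter.1 hc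
    have hcv : c ≠ v := fun hcv => (mem_sdiff.1 (hv ▸ mem_singleton_self v)).2 (hcv ▸ hcA)
    rw [restrict_simpBdry_of_sdiff_eq_singleton hv, map_smul,
      coneMap_ofFinset_of_mem (mem_erase.2 ⟨hcv, hcσ⟩), smul_zero]
  · rw [restrict_simpBdry_of_two_le h₂, map_zero] at h
    exact (h rfl).elim

lemma map_eq_sum_support {m' : ℕ} (f : GChain R m →ₗ[R] GChain R m') (N : GChain R m) :
    f N = ∑ σ ∈ N.support, N σ • f (Finsupp.single σ 1) := by
  conv_lhs => rw [← Finsupp.sum_single N]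
  rw [map_finsuppSum, Finsupp.sum]
  simp_rw [← Finsupp.smul_single_one _ (N _), map_smul]

lemma collapse_eq_zero_of_bdry_eq_zero {Z : GChain R (m + 1)} (hZ : bdry Z = 0)
    (hB : suppOn B Z) (hW : #(A ∩ B) ≤ m + 2) (hc : c ∈ A ∩ B ∨ A ∩ B = ∅) :
    collapse A c Z = 0 := by
  rw [collapse_of_bdry_eq_zero hZ, coneMap_eq_zero, bdry_zero]
  intro σ hσ
  have hσA := suppOn_restrict Z σ hσ
  rw [restrict_apply, Finsupp.support_filter] at hσ
  have hσW : σ.1 = A ∩ B := eq_of_subset_of_card_le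
    (subset_inter hσA (hB σ (mem_filter.1 hσ).1)) (by rw [σ.2]; exact hW)
  rw [hσW]
  exact hc.resolve_right fun he => by
    have := σ.2
    rw [hσW, he, card_empty] at this
    omega

end Complex

section Norm

variable {K : Type} [Field K] [LinearOrder K] [IsStrictOrderedRing K] {m m' : ℕ}
  {s A : Finset ℕ} {c : ℕ}

lemma fnorm_eq_sum {M : GChain K m} {t : Finset (Simp m)} (h : M.support ⊆ t) :
    fnorm M = ∑ σ ∈ t, |M σ| :=
  Finsupp.sum_of_support_subset M h _ fun _ _ => abs_zero

lemma fnorm_zero : fnorm (0 : GChain K m) = 0 := Finsupp.sum_zero_index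

lemma fnorm_nonneg (M : GChain K m) : 0 ≤ fnorm M :=
  sum_nonneg fun _ _ => abs_nonneg _

lemma fnorm_add_le (M N : GChain K m) : fnorm (M + N) ≤ fnorm M + fnorm N := by
  classical
  rw [fnorm_eq_sum Finsupp.support_add, fnorm_eq_sum subset_union_left,
    fnorm_eq_sum subset_union_right, ← sum_add_distrib]
  exact sum_le_sum fun σ _ => abs_add_le _ _

lemma fnorm_sum_le {ι : Type} (t : Finset ι) (f : ι → GChain K m) :
    fnorm (∑ i ∈ t, f i) ≤ ∑ i ∈ t, fnorm (f i) := by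
  induction t using Finset.cons_induction with
  | empty => simp [fnorm]
  | cons i t hit ih =>
    rw [sum_cons, sum_cons]
    exact (fnorm_add_le _ _).trans (add_le_add_right ih _)

lemma fnorm_smul (k : K) (M : GChain K m) : fnorm (k • M) = |k| * fnorm M := by
  rw [fnorm_eq_sum Finsupp.support_smul, fnorm, Finsupp.sum, mul_sum]
  exact sum_congr rfl fun σ _ => by rw [Finsupp.smul_apply, smul_eq_mul, abs_mul]

lemma fnorm_single (σ : Simp m) (k : K) : fnorm (Finsupp.single σ k) = |k| :=
  Finsupp.sum_single_index abs_zero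

lemma fnorm_ofFinset_le : fnorm (ofFinset K m s) ≤ 1 := by
  by_cases h : #s = m + 1
  · rw [ofFinset, dif_pos h, fnorm_single, abs_one]
  · rw [ofFinset_of_card_ne h, fnorm_zero]
    exact zero_le_one

lemma fnorm_filter_add_fnorm_filter_not (p : Simp m → Prop) [DecidablePred p] (M : GChain K m) :
    fnorm (M.filter p) + fnorm (M.filter fun σ => ¬ p σ) = fnorm M := by
  have hfilter : ∀ q : Simp m → Prop, ∀ [DecidablePred q],
      fnorm (M.filter q) = ∑ σ ∈ M.support with q σ, |M σ| := fun q _ => by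
    rw [fnorm_eq_sum (Finsupp.support_filter _ _).le]
    exact sum_congr rfl fun σ hσ => by rw [Finsupp.filter_apply_pos _ _ (mem_filter.1 hσ).2]
  rw [hfilter, hfilter, sum_filter_add_sum_filter_not, fnorm_eq_sum subset_rfl]

lemma fnorm_map_le (f : GChain K m →ₗ[K] GChain K m')
    (hf : ∀ σ, fnorm (f (Finsupp.single σ 1)) ≤ 1) (M : GChain K m) :
    fnorm (f M) ≤ ∑ σ ∈ M.support with f (Finsupp.single σ 1) ≠ 0, |M σ| := by
  classical
  have hM : f M = ∑ σ ∈ M.support with f (Finsupp.single σ 1) ≠ 0,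
      M σ • f (Finsupp.single σ 1) := by
    rw [map_eq_sum_support, sum_filter_of_ne fun σ _ h => right_ne_zero_of_smul h]
  rw [hM]
  refine (fnorm_sum_le _ _).trans (sum_le_sum fun σ _ => ?_)
  rw [fnorm_smul]
  exact mul_le_of_le_one_right (abs_nonneg _) (hf σ)

lemma fnorm_collapse_single_le (σ : Simp (m + 1)) :
    fnorm (collapse A c (Finsupp.single σ (1 : K))) ≤ 1 := by
  by_cases hA : σ.1 ⊆ A
  · rw [collapse_of_suppOn fun τ hτ => mem_singleton.1 (Finsupp.support_single_subset hτ) ▸ hA,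
      fnorm_single, abs_one]
  rw [collapse_single_of_not_subset hA]
  by_cases h₂ : 2 ≤ #(σ.1 \ A)
  · rw [restrict_simpBdry_of_two_le h₂, map_zero, fnorm_zero]
    exact zero_le_one
  obtain ⟨v, hv⟩ := card_eq_one.1 (show #(σ.1 \ A) = 1 by
    have := card_pos.2 (sdiff_nonempty.2 hA); omega)
  have hvσ := (mem_sdiff.1 (hv ▸ mem_singleton_self v)).1
  rw [restrict_simpBdry_of_sdiff_eq_singleton hv, map_smul,
    coneMap_ofFinset (card_face σ hvσ), smul_smul, fnorm_smul, abs_mul,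
    abs_neg_one_pow, abs_neg_one_pow, one_mul, one_mul]
  exact fnorm_ofFinset_le

end Norm

section Combinatorics

variable {n : ℕ} {s A B W : Finset ℕ} {c c' x : ℕ}

/-- Admissible apexes for the collapses onto `A` and onto `B`, where `W = A ∩ B`. -/
def IsApexPair (n : ℕ) (W : Finset ℕ) (c c' : ℕ) : Prop :=
  (c ∈ W ∨ W = ∅) ∧ (c' ∈ W ∨ W = ∅) ∧ (#W = n + 2 → c ≠ c')

lemma IsApexPair.symm (h : IsApexPair n W c c') : IsApexPair n W c' c :=
  ⟨h.2.1, h.1, fun hW => (h.2.2 hW).symm⟩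

lemma exists_isApexPair_left (hx : x ∈ W) : ∃ c', IsApexPair n W x c' := by
  by_cases hW : #W = n + 2
  · obtain ⟨y, hy, hyx⟩ := exists_mem_ne (show 1 < #W by omega) x
    exact ⟨y, Or.inl hx, Or.inl hy, fun _ => hyx.symm⟩
  · exact ⟨x, Or.inl hx, Or.inl hx, fun h => absurd h hW⟩

lemma exists_isApexPair (n : ℕ) (W : Finset ℕ) : ∃ c c', IsApexPair n W c c' := by
  obtain rfl | ⟨x, hx⟩ := W.eq_empty_or_nonempty
  · exact ⟨0, 0, Or.inr rfl, Or.inr rfl, fun h => by simp at h⟩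
  · exact ⟨x, exists_isApexPair_left hx⟩

/-- With `W = A ∩ B`: the simplices of a taut filling of `X + Y` that make up the filling of `X`. -/
def OnSide (A W s : Finset ℕ) : Prop :=
  s ⊆ A ∨ (#(s \ A) ≤ 1 ∧ Disjoint s W)

instance (A W : Finset ℕ) : DecidablePred (OnSide A W) :=
  fun s => inferInstanceAs (Decidable (s ⊆ A ∨ (#(s \ A) ≤ 1 ∧ Disjoint s W)))

lemma OnSide.mono {t : Finset ℕ} (hts : t ⊆ s) : OnSide A W s → OnSide A W t
  | .inl h => .inl (hts.trans h)
  | .inr ⟨h₁, h₂⟩ => .inr ⟨(card_le_card (sdiff_subset_sdiff hts subset_rfl)).trans h₁,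
      h₂.mono_left hts⟩

lemma card_le_card_inter_add_card_sdiff_add_card_sdiff (s A B : Finset ℕ) :
    #s ≤ #(s ∩ (A ∩ B)) + #(s \ A) + #(s \ B) := by
  calc #s ≤ #(s ∩ (A ∩ B) ∪ (s \ A) ∪ (s \ B)) := card_le_card fun x hx => by
        by_cases hA : x ∈ A <;> by_cases hB : x ∈ B <;> simp [hx, hA, hB]
    _ ≤ _ := (card_union_le _ _).trans (add_le_add_left (card_union_le _ _) _)

lemma card_sdiff_le_one_of_survivesCollapse (h : SurvivesCollapse A c s) : #(s \ A) ≤ 1 := by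
  rcases h with h | h
  · rw [sdiff_eq_empty_iff_subset.2 h, card_empty]; exact zero_le_one
  · exact h.1.le

lemma notMem_of_survivesCollapse (hsA : ¬ s ⊆ A) (hx : x ∈ A) (h : SurvivesCollapse A x s) :
    x ∉ s :=
  fun hxs => (h.resolve_left hsA).2 (mem_inter.2 ⟨hxs, hx⟩)

/-- Otherwise `A ∩ B` would hold at least `n + 1` vertices of `s` and, besides them, the apexes of
the collapses that move a vertex of `s`. -/
lemma not_survivesCollapse_and (hp : IsApexPair n (A ∩ B) c c') (hW : #(A ∩ B) ≤ n + 2)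
    (hs : #s = n + 3) : ¬ (SurvivesCollapse A c s ∧ SurvivesCollapse B c' s) := by
  rintro ⟨hA, hB⟩
  have hcount := card_le_card_inter_add_card_sdiff_add_card_sdiff s A B
  have ha := card_sdiff_le_one_of_survivesCollapse hA
  have hb := card_sdiff_le_one_of_survivesCollapse hB
  obtain hWe | hWne := (A ∩ B).eq_empty_or_nonempty
  · rw [hWe, inter_empty, card_empty] at hcount; omega
  have hsplit := card_sdiff_add_card_inter (A ∩ B) s
  rw [inter_comm (A ∩ B) s] at hsplit
  have hcW := hp.1.resolve_right hWne.ne_empty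
  have hc'W := hp.2.1.resolve_right hWne.ne_empty
  have hcE : ¬ s ⊆ A → c ∈ (A ∩ B) \ s := fun hsA =>
    mem_sdiff.2 ⟨hcW, notMem_of_survivesCollapse hsA (mem_inter.1 hcW).1 hA⟩
  have hc'E : ¬ s ⊆ B → c' ∈ (A ∩ B) \ s := fun hsB =>
    mem_sdiff.2 ⟨hc'W, notMem_of_survivesCollapse hsB (mem_inter.1 hc'W).2 hB⟩
  have hsdiff : ∀ {C : Finset ℕ}, s ⊆ C → #(s \ C) = 0 := fun h => by
    rw [sdiff_eq_empty_iff_subset.2 h, card_empty]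
  by_cases hsA : s ⊆ A <;> by_cases hsB : s ⊆ B
  · have := hsdiff hsA; have := hsdiff hsB; omega
  · have := hsdiff hsA; have := card_pos.2 ⟨c', hc'E hsB⟩; omega
  · have := hsdiff hsB; have := card_pos.2 ⟨c, hcE hsA⟩; omega
  · by_cases hcc' : c = c'
    · have := card_pos.2 ⟨c, hcE hsA⟩
      exact hp.2.2 (by omega) hcc'
    · have := card_le_card (insert_subset (hcE hsA) (singleton_subset_iff.2 (hc'E hsB)))
      rw [card_pair hcc'] at this
      omega

/-- If `s` has a single vertex outside `A`, then a vertex of `s ∩ A ∩ B` taken as apex for `A`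
kills `s`, which must then survive the collapse onto `B`; but `s` cannot have a single vertex
outside `B` as well, for then two vertices of `s ∩ A ∩ B` taken as apexes kill it. -/
lemma disjoint_inter_of_card_sdiff_eq_one (hn : 1 ≤ n) (hs : #s = n + 3)
    (hsurv : ∀ c c', IsApexPair n (A ∩ B) c c' → SurvivesCollapse A c s ∨ SurvivesCollapse B c' s)
    (hA : #(s \ A) = 1) (hB : ¬ s ⊆ B) : Disjoint s (A ∩ B) := by
  have hsA : ¬ s ⊆ A := fun h => by rw [sdiff_eq_empty_iff_subset.2 h, card_empty] at hA; omega
  rw [disjoint_left]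
  intro x hxs hxW
  obtain ⟨c', hp⟩ := exists_isApexPair_left (n := n) hxW
  have hsB : #(s \ B) = 1 := by
    rcases hsurv x c' hp with h | h
    · exact absurd hxs (notMem_of_survivesCollapse hsA (mem_inter.1 hxW).1 h)
    · exact (h.resolve_left hB).1
  have hcount := card_le_card_inter_add_card_sdiff_add_card_sdiff s A B
  obtain ⟨a, ha, b, hb, hab⟩ := one_lt_card.1 (show 1 < #(s ∩ (A ∩ B)) by omega)
  simp only [mem_inter] at ha hb
  rcases hsurv a b ⟨Or.inl (mem_inter.2 ha.2), Or.inl (mem_inter.2 hb.2), fun _ => hab⟩ with h | h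
  · exact notMem_of_survivesCollapse hsA ha.2.1 h ha.1
  · exact notMem_of_survivesCollapse hB hb.2.2 h hb.1

lemma onSide_or_onSide (hn : 1 ≤ n) (hs : #s = n + 3)
    (hsurv : ∀ c c', IsApexPair n (A ∩ B) c c' → SurvivesCollapse A c s ∨ SurvivesCollapse B c' s) :
    OnSide A (A ∩ B) s ∨ OnSide B (A ∩ B) s := by
  by_cases hsA : s ⊆ A
  · exact Or.inl (Or.inl hsA)
  by_cases hsB : s ⊆ B
  · exact Or.inr (Or.inl hsB)
  obtain ⟨c, c', hp⟩ := exists_isApexPair n (A ∩ B)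
  rcases hsurv c c' hp with h | h
  · have hA := (h.resolve_left hsA).1
    exact Or.inl (Or.inr ⟨hA.le, disjoint_inter_of_card_sdiff_eq_one hn hs hsurv hA hsB⟩)
  · have hB := (h.resolve_left hsB).1
    have hsurv' : ∀ c c', IsApexPair n (B ∩ A) c c' →
        SurvivesCollapse B c s ∨ SurvivesCollapse A c' s := fun c c' hp =>
      (hsurv c' c (inter_comm A B ▸ hp.symm)).symm
    refine Or.inr (Or.inr ⟨hB.le, ?_⟩)
    rw [inter_comm]
    exact disjoint_inter_of_card_sdiff_eq_one hn hs hsurv' hB hsA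

/-- A simplex on the `B` side but not on the `A` side has its vertices in `A` spanning all of
`A ∩ B`, so it contains the apex for `A`. -/
lemma not_survivesCollapse_of_onSide (hc : c ∈ A ∩ B ∨ A ∩ B = ∅) (hW : #(A ∩ B) ≤ n + 2)
    (hs : #s = n + 3) (hB : OnSide B (A ∩ B) s) (hA : ¬ OnSide A (A ∩ B) s) :
    ¬ SurvivesCollapse A c s := by
  intro h
  obtain ⟨hsA, hdisj⟩ := not_or.1 hA
  have ha := (h.resolve_left hsA).1
  have hWne : ¬ Disjoint s (A ∩ B) := fun hd => hdisj ⟨ha.le, hd⟩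
  have hsB : s ⊆ B := hB.resolve_right fun h => hWne h.2
  have hsAB : s ∩ A ⊆ A ∩ B := fun x hx => by
    simp only [mem_inter] at hx ⊢; exact ⟨hx.2, hsB hx.1⟩
  have heq : s ∩ A = A ∩ B := eq_of_subset_of_card_le hsAB (by
    have := card_inter_add_card_sdiff s A; omega)
  have hcW : c ∈ A ∩ B := hc.resolve_right fun he => hWne (he ▸ disjoint_empty_right s)
  exact (h.resolve_left hsA).2 (heq ▸ hcW)

lemma subset_of_onSide_of_onSide (hn : 1 ≤ n) (hs : #s = n + 2) (hA : OnSide A (A ∩ B) s)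
    (hB : OnSide B (A ∩ B) s) : s ⊆ A := by
  refine hA.resolve_right fun ⟨ha, hdisj⟩ => ?_
  have hcount := card_le_card_inter_add_card_sdiff_add_card_sdiff s A B
  rw [disjoint_iff_inter_eq_empty.1 hdisj, card_empty] at hcount
  rcases hB with hsB | ⟨hb, _⟩
  · rw [sdiff_eq_empty_iff_subset.2 hsB, card_empty] at hcount; omega
  · omega

end Combinatorics

section Volume

variable {m n : ℕ} {A B : Finset ℕ} {c c' : ℕ} {X Y : GChain ℚ (n + 1)} {M : GChain ℚ (n + 2)}

lemma fnorm_collapse_le (M : GChain ℚ (m + 1)) :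
    fnorm (collapse A c M) ≤ ∑ σ ∈ M.support with SurvivesCollapse A c σ.1, |M σ| :=
  (fnorm_map_le _ fnorm_collapse_single_le M).trans <|
    sum_le_sum_of_subset_of_nonneg
      (monotone_filter_right _ fun _ _ => survivesCollapse_of_collapse_ne_zero)
      fun _ _ _ => abs_nonneg _

lemma exists_bdry_eq {X : GChain ℚ (m + 1)} (hX : bdry X = 0) : ∃ M, bdry M = X :=
  ⟨coneMap 0 X, by simpa [hX] using bdry_coneMap_add_coneMap_bdry 0 X⟩

def fillingNorms (X : GChain ℚ m) : Set ℝ :=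
  {r : ℝ | ∃ M : GChain ℚ (m + 1), bdry M = X ∧ ((fnorm M : ℚ) : ℝ) = r}

lemma qvol_eq_sInf (X : GChain ℚ m) : qvol X = sInf (fillingNorms X) := rfl

lemma bddBelow_fillingNorms (X : GChain ℚ m) : BddBelow (fillingNorms X) :=
  ⟨0, by rintro _ ⟨N, -, rfl⟩; exact_mod_cast fnorm_nonneg N⟩

lemma fillingNorms_nonempty {X : GChain ℚ (m + 1)} (hX : bdry X = 0) :
    (fillingNorms X).Nonempty :=
  let ⟨M, hM⟩ := exists_bdry_eq hX; ⟨_, M, hM, rfl⟩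

lemma qvol_le {X : GChain ℚ m} {M : GChain ℚ (m + 1)} (h : bdry M = X) :
    qvol X ≤ ((fnorm M : ℚ) : ℝ) :=
  csInf_le (bddBelow_fillingNorms X) ⟨M, h, rfl⟩

lemma le_qvol {X : GChain ℚ (m + 1)} (hX : bdry X = 0) {a : ℝ}
    (h : ∀ M, bdry M = X → a ≤ ((fnorm M : ℚ) : ℝ)) : a ≤ qvol X :=
  le_csInf (fillingNorms_nonempty hX) fun _ ⟨M, hM, hr⟩ => hr ▸ h M hM

lemma qvol_add_le {X Y : GChain ℚ (m + 1)} (hX : bdry X = 0) (hY : bdry Y = 0) :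
    qvol (X + Y) ≤ qvol X + qvol Y := by
  rw [qvol_eq_sInf, qvol_eq_sInf, qvol_eq_sInf, ← csInf_add (fillingNorms_nonempty hX)
    (bddBelow_fillingNorms X) (fillingNorms_nonempty hY) (bddBelow_fillingNorms Y)]
  refine le_csInf ((fillingNorms_nonempty hX).add (fillingNorms_nonempty hY)) ?_
  rintro _ ⟨_, ⟨MX, hMX, rfl⟩, _, ⟨MY, hMY, rfl⟩, rfl⟩
  refine (qvol_le (M := MX + MY) (by rw [bdry_add, hMX, hMY])).trans ?_
  exact (Rat.cast_le.2 (fnorm_add_le MX MY)).trans_eq (Rat.cast_add _ _)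

lemma onSide_of_mem_support_bdry_sub {C W : Finset ℕ} {N : GChain ℚ (m + 1)} {Z : GChain ℚ m}
    (hN : ∀ σ ∈ N.support, OnSide C W σ.1) (hZ : suppOn C Z) :
    ∀ δ ∈ (bdry N - Z).support, OnSide C W δ.1 := by
  classical
  intro δ hδ
  rcases mem_union.1 (Finsupp.support_sub hδ) with hδ | hδ
  · obtain ⟨σ, hσ, hδσ⟩ := exists_subset_of_mem_support_bdry hδ
    exact (hN σ hσ).mono hδσ
  · exact Or.inl (hZ δ hδ)

lemma bdry_collapse_eq (hW : #(A ∩ B) ≤ n + 2) (hX : suppOn A X) (hYc : bdry Y = 0)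
    (hY : suppOn B Y) (hc : c ∈ A ∩ B ∨ A ∩ B = ∅) (hM : bdry M = X + Y) :
    bdry (collapse A c M) = X := by
  rw [bdry_collapse, hM, map_add, collapse_of_suppOn hX,
    collapse_eq_zero_of_bdry_eq_zero hYc hY hW hc, add_zero]

lemma collapse_eq_zero_of_onSide {R : Type} [CommRing R] (hc : c ∈ A ∩ B ∨ A ∩ B = ∅)
    (hW : #(A ∩ B) ≤ n + 2) {N : GChain R (n + 2)}
    (hN : ∀ σ ∈ N.support, OnSide B (A ∩ B) σ.1 ∧ ¬ OnSide A (A ∩ B) σ.1) :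
    collapse A c N = 0 := by
  rw [map_eq_sum_support]
  refine sum_eq_zero fun σ hσ => ?_
  rw [not_ne_iff.1 (mt survivesCollapse_of_collapse_ne_zero
    (not_survivesCollapse_of_onSide hc hW σ.2 (hN σ hσ).1 (hN σ hσ).2)), smul_zero]

/-- The collapses onto `A` and onto `B` fill `X` and `Y` using disjoint parts of `M`. -/
theorem qvol_add_qvol_le_sum (hW : #(A ∩ B) ≤ n + 2) (hXc : bdry X = 0) (hYc : bdry Y = 0)
    (hX : suppOn A X) (hY : suppOn B Y) (hp : IsApexPair n (A ∩ B) c c') (hM : bdry M = X + Y) :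
    qvol X + qvol Y ≤ ((∑ σ ∈ M.support with
      SurvivesCollapse A c σ.1 ∨ SurvivesCollapse B c' σ.1, |M σ| : ℚ) : ℝ) := by
  have hqX := (qvol_le (bdry_collapse_eq hW hX hYc hY hp.1 hM)).trans
    (Rat.cast_le.2 (fnorm_collapse_le (A := A) (c := c) M))
  have hqY := (qvol_le (bdry_collapse_eq (inter_comm A B ▸ hW) hY hXc hX
    (inter_comm A B ▸ hp.2.1) (add_comm X Y ▸ hM))).trans
    (Rat.cast_le.2 (fnorm_collapse_le (A := B) (c := c') M))
  rw [filter_or, sum_union (disjoint_filter.2 fun σ _ hσA hσB =>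
    not_survivesCollapse_and hp hW σ.2 ⟨hσA, hσB⟩), Rat.cast_add]
  linarith

theorem qvol_add_of_card_inter_le (hW : #(A ∩ B) ≤ n + 2) (hXc : bdry X = 0)
    (hYc : bdry Y = 0) (hX : suppOn A X) (hY : suppOn B Y) :
    qvol (X + Y) = qvol X + qvol Y := by
  obtain ⟨c, c', hp⟩ := exists_isApexPair n (A ∩ B)
  refine le_antisymm (qvol_add_le hXc hYc)
    (le_qvol (by rw [bdry_add, hXc, hYc, add_zero]) fun M hM => ?_)
  refine (qvol_add_qvol_le_sum hW hXc hYc hX hY hp hM).trans ?_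
  rw [fnorm_eq_sum subset_rfl]
  exact_mod_cast sum_le_sum_of_subset_of_nonneg (filter_subset _ _) fun _ _ _ => abs_nonneg _

/-- Otherwise the estimate of `qvol_add_qvol_le_sum` would be strict. -/
lemma survivesCollapse_of_taut (hW : #(A ∩ B) ≤ n + 2) (hXc : bdry X = 0) (hYc : bdry Y = 0)
    (hX : suppOn A X) (hY : suppOn B Y) (hM : bdry M = X + Y)
    (hT : ((fnorm M : ℚ) : ℝ) = qvol X + qvol Y) (hp : IsApexPair n (A ∩ B) c c') :
    ∀ σ ∈ M.support, SurvivesCollapse A c σ.1 ∨ SurvivesCollapse B c' σ.1 := by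
  have hle := qvol_add_qvol_le_sum hW hXc hYc hX hY hp hM
  rw [← hT, fnorm_eq_sum subset_rfl, ← sum_filter_add_sum_filter_not M.support
    fun σ => SurvivesCollapse A c σ.1 ∨ SurvivesCollapse B c' σ.1, Rat.cast_le] at hle
  have hrest :=
    le_antisymm ((add_le_iff_nonpos_right _).1 hle) (sum_nonneg fun σ _ => abs_nonneg (M σ))
  intro σ hσ
  by_contra h
  exact Finsupp.mem_support_iff.1 hσ <| abs_eq_zero.1 <|
    (sum_eq_zero_iff_of_nonneg fun _ _ => abs_nonneg _).1 hrest σ (mem_filter.2 ⟨hσ, h⟩)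

/-- The error `bdry MX - X = Y - bdry MY` lives on both sides, hence in `A`, where the collapse
onto `A` is the identity; but that collapse kills `MY` and so sends the error to `0`. -/
theorem bdry_filter_onSide_of_taut (hn : 1 ≤ n) (hW : #(A ∩ B) ≤ n + 2) (hXc : bdry X = 0)
    (hYc : bdry Y = 0) (hX : suppOn A X) (hY : suppOn B Y) (hM : bdry M = X + Y)
    (hT : ((fnorm M : ℚ) : ℝ) = qvol X + qvol Y) :
    bdry (M.filter fun σ => OnSide A (A ∩ B) σ.1) = X ∧
      bdry (M.filter fun σ => ¬ OnSide A (A ∩ B) σ.1) = Y := by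
  set MX := M.filter fun σ => OnSide A (A ∩ B) σ.1
  set MY := M.filter fun σ => ¬ OnSide A (A ∩ B) σ.1
  have hsplit : MX + MY = M := Finsupp.filter_add_filter_not M _
  have hside : ∀ σ ∈ M.support, OnSide A (A ∩ B) σ.1 ∨ OnSide B (A ∩ B) σ.1 := fun σ hσ =>
    onSide_or_onSide hn σ.2 fun c c' hp => survivesCollapse_of_taut hW hXc hYc hX hY hM hT hp σ hσ
  have hMX : ∀ σ ∈ MX.support, OnSide A (A ∩ B) σ.1 := fun σ hσ => by
    rw [Finsupp.support_filter] at hσ; exact (mem_filter.1 hσ).2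
  have hMY : ∀ σ ∈ MY.support, σ ∈ M.support ∧ ¬ OnSide A (A ∩ B) σ.1 := fun σ hσ => by
    rw [Finsupp.support_filter] at hσ; exact mem_filter.1 hσ
  obtain ⟨c, c', hp⟩ := exists_isApexPair n (A ∩ B)
  have hcollapseMY : collapse A c MY = 0 := collapse_eq_zero_of_onSide hp.1 hW fun σ hσ =>
    ⟨(hside σ (hMY σ hσ).1).resolve_left (hMY σ hσ).2, (hMY σ hσ).2⟩
  have hbX : bdry (collapse A c MX) = X := by
    rw [← bdry_collapse_eq hW hX hYc hY hp.1 hM, ← hsplit, map_add, hcollapseMY, add_zero]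
  have herror : bdry MX - X = -(bdry MY - Y) := by
    have := congrArg bdry hsplit
    rw [bdry_add, hM] at this
    rw [neg_sub, sub_eq_sub_iff_add_eq_add, this, add_comm X Y]
  have herrorA : suppOn A (bdry MX - X) := fun δ hδ => by
    refine subset_of_onSide_of_onSide hn δ.2 (onSide_of_mem_support_bdry_sub hMX hX δ hδ) ?_
    rw [herror, Finsupp.support_neg] at hδ
    refine onSide_of_mem_support_bdry_sub (fun σ hσ => ?_) hY δ hδ
    exact ((hside σ (hMY σ hσ).1).resolve_left (hMY σ hσ).2)
  have herror0 : bdry MX - X = 0 := by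
    rw [← collapse_of_suppOn (c := c) herrorA, map_sub, ← bdry_collapse, hbX,
      collapse_of_suppOn hX, sub_self]
  refine ⟨sub_eq_zero.1 herror0, ?_⟩
  rw [herror, neg_eq_zero] at herror0
  exact sub_eq_zero.1 herror0

theorem exists_split_of_taut (hn : 1 ≤ n) (hW : #(A ∩ B) ≤ n + 2) (hXc : bdry X = 0)
    (hYc : bdry Y = 0) (hX : suppOn A X) (hY : suppOn B Y) (hM : bdry M = X + Y) (hT : TautQ M) :
    ∃ MX MY : GChain ℚ (n + 2), M = MX + MY ∧ bdry MX = X ∧ bdry MY = Y ∧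
      fnorm M = fnorm MX + fnorm MY ∧ TautQ MX ∧ TautQ MY := by
  rw [TautQ, hM, qvol_add_of_card_inter_le hW hXc hYc hX hY] at hT
  obtain ⟨hbX, hbY⟩ := bdry_filter_onSide_of_taut hn hW hXc hYc hX hY hM hT
  have hnorm := (fnorm_filter_add_fnorm_filter_not (fun σ => OnSide A (A ∩ B) σ.1) M).symm
  have hqX := qvol_le hbX
  have hqY := qvol_le hbY
  have hnorm' := congrArg (fun q : ℚ => (q : ℝ)) hnorm
  simp only [Rat.cast_add] at hnorm'
  refine ⟨_, _, (Finsupp.filter_add_filter_not M _).symm, hbX, hbY, hnorm, ?_, ?_⟩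
  · rw [TautQ, hbX]; linarith
  · rw [TautQ, hbY]; linarith

end Volume

end SimplicialChain

/-- `Qvol` is additive under almost disjoint union, and for
cycles of dimension `≥ 2` every taut rational filling splits. -/
theorem qvol_add_and_taut_splits {n : ℕ} (A B : Finset ℕ)
    (h : (A ∩ B).card ≤ n + 2)
    (X Y : GChain ℚ (n + 1)) (hXc : bdry X = 0) (hYc : bdry Y = 0)
    (hX : suppOn A X) (hY : suppOn B Y) :
    qvol (X + Y) = qvol X + qvol Y ∧
      (1 ≤ n → ∀ M : GChain ℚ (n + 2), bdry M = X + Y → TautQ M →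
        ∃ MX MY : GChain ℚ (n + 2), M = MX + MY ∧ bdry MX = X ∧ bdry MY = Y ∧
          fnorm M = fnorm MX + fnorm MY ∧ TautQ MX ∧ TautQ MY) := by
  have hadd := SimplicialChain.qvol_add_of_card_inter_le h hXc hYc hX hY
  exact ⟨hadd, fun hn M hM hT => SimplicialChain.exists_split_of_taut hn h hXc hYc hX hY hM hT⟩
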